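/- (Dirac's theorem, reformulated) Let n ≥ 2, let 𝔽 be a field and let S_2 ⊆ C([n],2). The simple graph G = ([n], S_2) is chordal if and only if the clique complex ⟨S_2⟩ is D-perfect. -/

import Mathlib

/-!
Common definitions for simplicial matroids, following Cordovil–Lemos–Linhares Sales,
"Dirac's theorem on simplicial matroids".

We model `[n] = {1,…,n}` by `Fin n`, and a subset of `[n]` by a `Finset (Fin n)`.
A family `S_k ⊆ C([n],k)` is a `Finset (Finset (Fin n))` (all of whose members
have cardinality `k`, which is imposed by hypotheses in the theorems).
-/

open Finset

/-- The incidence number `[F' : F]`: if `F = i₁ < i₂ < ⋯ < iₘ` and `F' = F \ {iⱼ}`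
then `[F' : F] = (-1)ʲ` (with `j` the 1-based position of the deleted element),
and `[F' : F] = 0` otherwise. -/
def inc {n : ℕ} (F' F : Finset (Fin n)) : ℤ :=
  ∑ i ∈ F, if F' = F.erase i then (-1 : ℤ) ^ (F.filter (fun j => j ≤ i)).card else 0

/-- The family `C([n], m)` of `m`-element subsets of `[n]`, as a type. -/
abbrev Csets (n m : ℕ) := {F : Finset (Fin n) // F.card = m}

/-- `∂_k F`, the boundary of a single `k`-subset `F` of `[n]`,
as a vector of `𝔽^{C([n],k-1)}`. -/
def bvec (𝔽 : Type*) [Field 𝔽] (n k : ℕ) (F : Finset (Fin n)) : Csets n (k - 1) → 𝔽 :=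
  fun F' => ((inc F'.1 F : ℤ) : 𝔽)

/-- Independence in the simplicial matroid `Sim_k^n(S_k)` over `𝔽`:
`X ⊆ S_k` is independent iff the vectors `∂_k F`, `F ∈ X`, are linearly independent. -/
def SimIndep (𝔽 : Type*) [Field 𝔽] (n k : ℕ) (Sk X : Finset (Finset (Fin n))) : Prop :=
  X ⊆ Sk ∧ LinearIndependent 𝔽 (fun F : X => bvec 𝔽 n k F.1)

/-- A circuit of `Sim_k^n(S_k)`: a minimal dependent subset of the ground set. -/
def SimCircuit (𝔽 : Type*) [Field 𝔽] (n k : ℕ) (Sk C : Finset (Finset (Fin n))) : Prop :=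
  C ⊆ Sk ∧ ¬ LinearIndependent 𝔽 (fun F : C => bvec 𝔽 n k F.1) ∧
    ∀ C' ⊂ C, LinearIndependent 𝔽 (fun F : C' => bvec 𝔽 n k F.1)

/-- The rank (in `Sim_k^n`) of a set `X` of `k`-subsets of `[n]`:
the dimension of the span of the boundaries of its members. -/
noncomputable def simRank (𝔽 : Type*) [Field 𝔽] (n k : ℕ) (X : Finset (Finset (Fin n))) : ℕ :=
  Module.finrank 𝔽 (Submodule.span 𝔽 ((fun F => bvec 𝔽 n k F) '' (X : Set (Finset (Fin n)))))

/-- A cocircuit of `Sim_k^n(S_k)`, i.e. a circuit of the dual matroid: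
a minimal set `C ⊆ S_k` whose complement does not span (`X` is independent in the dual
matroid iff `r(E ∖ X) = r(E)`). -/
def SimCocircuit (𝔽 : Type*) [Field 𝔽] (n k : ℕ) (Sk C : Finset (Finset (Fin n))) : Prop :=
  C ⊆ Sk ∧ simRank 𝔽 n k (Sk \ C) < simRank 𝔽 n k Sk ∧
    ∀ C' ⊂ C, simRank 𝔽 n k (Sk \ C') = simRank 𝔽 n k Sk

/-- The boundary map `∂_k : 𝔽^{S_k} → 𝔽^{C([n],k-1)}`. -/
noncomputable def bdryMap (𝔽 : Type*) [Field 𝔽] (n k : ℕ) (Sk : Finset (Finset (Fin n))) :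
    (↥Sk → 𝔽) →ₗ[𝔽] (Csets n (k - 1) → 𝔽) :=
  Matrix.mulVecLin (Matrix.of fun (F' : Csets n (k - 1)) (F : ↥Sk) => ((inc F'.1 F.1 : ℤ) : 𝔽))

/-- The coboundary `δ^{k-1} V` of a `(k-1)`-subset `V` of `[n]`,
as a vector of `𝔽^{S_k}`; its `F`-coordinate is `[V : F]`. -/
def cobdry (𝔽 : Type*) [Field 𝔽] {n : ℕ} (Sk : Finset (Finset (Fin n)))
    (V : Finset (Fin n)) : ↥Sk → 𝔽 :=
  fun F => ((inc V F.1 : ℤ) : 𝔽)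

/-- The boundary `∂_{k+1} X` of a `(k+1)`-subset `X` of `[n]`, regarded as a vector
of `𝔽^{S_k}`; its `F`-coordinate is `[F : X]`. -/
def pbdry (𝔽 : Type*) [Field 𝔽] {n : ℕ} (Sk : Finset (Finset (Fin n)))
    (X : Finset (Fin n)) : ↥Sk → 𝔽 :=
  fun F => ((inc F.1 X : ℤ) : 𝔽)

open scoped Classical in
/-- The support of a vector of `𝔽^{S_k}`, as a set of `k`-subsets of `[n]`. -/
noncomputable def suppFin {𝔽 : Type*} [Field 𝔽] {n : ℕ} {Sk : Finset (Finset (Fin n))}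
    (v : ↥Sk → 𝔽) : Finset (Finset (Fin n)) :=
  (Sk.attach.filter fun F => v F ≠ 0).image Subtype.val

/-- `supp(δ^{k-1} V) ⊆ S_k`. -/
noncomputable def suppδ (𝔽 : Type*) [Field 𝔽] {n : ℕ} (Sk : Finset (Finset (Fin n)))
    (V : Finset (Fin n)) : Finset (Finset (Fin n)) :=
  suppFin (cobdry 𝔽 Sk V)

/-- The cocircuit space of `Sim_k^n(S_k)`: the orthogonal complement, with respect to the
standard bilinear form on `𝔽^{S_k}`, of the circuit space `ker ∂_k`. -/
noncomputable def cocircSpace (𝔽 : Type*) [Field 𝔽] (n k : ℕ) (Sk : Finset (Finset (Fin n))) :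
    Submodule 𝔽 (↥Sk → 𝔽) where
  carrier := {w | ∀ v ∈ LinearMap.ker (bdryMap 𝔽 n k Sk), ∑ F, v F * w F = 0}
  zero_mem' := by intro v hv; simp
  add_mem' := by
    intro a b ha hb v hv
    have h1 := ha v hv
    have h2 := hb v hv
    simp only [Pi.add_apply, mul_add, Finset.sum_add_distrib]
    rw [h1, h2, add_zero]
  smul_mem' := by
    intro c w hw v hv
    have h := hw v hv
    simp only [Pi.smul_apply, smul_eq_mul]
    calc ∑ F, v F * (c * w F) = ∑ F, c * (v F * w F) := by
          exact Finset.sum_congr rfl fun F _ => by ring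
      _ = c * ∑ F, v F * w F := (Finset.mul_sum _ _ _).symm
      _ = 0 := by rw [h, mul_zero]

/-- The faces of the `k`-hyperclique complex `⟨S_k⟩`: all `F ⊆ [n]` with `|F| < k`,
together with all `F` every `k`-element subset of which lies in `S_k`. -/
def IsFace {n : ℕ} (k : ℕ) (Sk : Finset (Finset (Fin n))) (F : Finset (Fin n)) : Prop :=
  F.card < k ∨ ∀ G ⊆ F, G.card = k → G ∈ Sk

/-- A facet of `⟨S_k⟩`: an inclusion-maximal face. -/
def IsFacet {n : ℕ} (k : ℕ) (Sk : Finset (Finset (Fin n))) (F : Finset (Fin n)) : Prop :=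
  IsFace k Sk F ∧ ∀ G, IsFace k Sk G → F ⊆ G → F = G

/-- `V` is simplicial in `⟨S_k⟩` if there is exactly one facet `X` of `⟨S_k⟩`
with `V ⊊ X`. -/
def SimplicialFace {n : ℕ} (k : ℕ) (Sk : Finset (Finset (Fin n))) (V : Finset (Fin n)) : Prop :=
  ∃! X, IsFacet k Sk X ∧ V ⊂ X

/-- The `k`-skeleta of the complexes `Δ_0 = ⟨S_k⟩`, `Δ_{j+1} = Δ_j ∖∖ V_j`, where
`Δ ∖∖ V = ⟨(skeleton of Δ) ∖ supp(δ^{k-1} V)⟩` (0-indexed). -/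
noncomputable def delSeq (𝔽 : Type*) [Field 𝔽] {n : ℕ} (Sk : Finset (Finset (Fin n)))
    (V : ℕ → Finset (Fin n)) : ℕ → Finset (Finset (Fin n))
  | 0 => Sk
  | j + 1 => delSeq 𝔽 Sk V j \ suppδ 𝔽 (delSeq 𝔽 Sk V j) (V j)

/-- `C*_j := supp(δ^{k-1} V_j) ∖ ⋃_{i<j} supp(δ^{k-1} V_i)` (0-indexed). -/
noncomputable def Cstar (𝔽 : Type*) [Field 𝔽] {n : ℕ} (Sk : Finset (Finset (Fin n)))
    (V : ℕ → Finset (Fin n)) (j : ℕ) : Finset (Finset (Fin n)) :=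
  suppδ 𝔽 Sk (V j) \ (Finset.range j).biUnion (fun i => suppδ 𝔽 Sk (V i))

/-- `(V_1,…,V_r)` (0-indexed: `V 0, …, V (r-1)`) is a basic linear sequence for `⟨S_k⟩`,
where `r` is the rank of `Sim_k^n(S_k)`: each `V_j` is a `(k-1)`-subset of `[n]` and each
`C*_j` is a cocircuit of `Sim_k^n(S_k(Δ_{j-1}))`. -/
def BasicLinearSeq (𝔽 : Type*) [Field 𝔽] (n k : ℕ) (Sk : Finset (Finset (Fin n))) (r : ℕ)
    (V : ℕ → Finset (Fin n)) : Prop :=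
  simRank 𝔽 n k Sk = r ∧ (∀ j < r, (V j).card = k - 1) ∧
    ∀ j < r, SimCocircuit 𝔽 n k (delSeq 𝔽 Sk V j) (Cstar 𝔽 Sk V j)

/-- `⟨S_k⟩` is D-perfect: there is a basic linear sequence `V_1,…,V_r` such that each `V_j`
is simplicial in `Δ_{j-1}`. -/
def DPerfect (𝔽 : Type*) [Field 𝔽] (n k : ℕ) (Sk : Finset (Finset (Fin n))) : Prop :=
  ∃ V : ℕ → Finset (Fin n),
    BasicLinearSeq 𝔽 n k Sk (simRank 𝔽 n k Sk) V ∧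
      ∀ j < simRank 𝔽 n k Sk, SimplicialFace k (delSeq 𝔽 Sk V j) (V j)

/-- A flat of `Sim_k^n(S_k)`: a closed subset of the ground set. -/
def SimFlat (𝔽 : Type*) [Field 𝔽] (n k : ℕ) (Sk X : Finset (Finset (Fin n))) : Prop :=
  X ⊆ Sk ∧ ∀ F ∈ Sk,
    bvec 𝔽 n k F ∈ Submodule.span 𝔽 ((fun G => bvec 𝔽 n k G) '' (X : Set (Finset (Fin n)))) →
      F ∈ X

/-- A hyperplane of `Sim_k^n(S_k)`: a flat of rank one less than the rank of the matroid. -/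
def SimHyperplane (𝔽 : Type*) [Field 𝔽] (n k : ℕ) (Sk H : Finset (Finset (Fin n))) : Prop :=
  SimFlat 𝔽 n k Sk H ∧ simRank 𝔽 n k H + 1 = simRank 𝔽 n k Sk

/-- A modular flat of `Sim_k^n(S_k)`:
`r(X) + r(Y) = r(X ∪ Y) + r(X ∩ Y)` for every flat `Y`. -/
def ModularFlat (𝔽 : Type*) [Field 𝔽] (n k : ℕ) (Sk X : Finset (Finset (Fin n))) : Prop :=
  SimFlat 𝔽 n k Sk X ∧ ∀ Y, SimFlat 𝔽 n k Sk Y →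
    simRank 𝔽 n k X + simRank 𝔽 n k Y = simRank 𝔽 n k (X ∪ Y) + simRank 𝔽 n k (X ∩ Y)

open scoped Classical in
/-- The closure of `X` in `Sim_k^n(S_k)`. -/
noncomputable def simClosure (𝔽 : Type*) [Field 𝔽] (n k : ℕ)
    (Sk X : Finset (Finset (Fin n))) : Finset (Finset (Fin n)) :=
  Sk.filter fun F =>
    bvec 𝔽 n k F ∈ Submodule.span 𝔽 ((fun G => bvec 𝔽 n k G) '' (X : Set (Finset (Fin n))))

/-- `Sim_k^n(S_k)` is supersolvable: it admits a maximal chain of modular flats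
`cl(∅) = X_0 ⊊ X_1 ⊊ ⋯ ⊊ X_r = S_k`, `r` the rank. -/
def Supersolvable (𝔽 : Type*) [Field 𝔽] (n k : ℕ) (Sk : Finset (Finset (Fin n))) : Prop :=
  ∃ X : ℕ → Finset (Finset (Fin n)),
    X 0 = simClosure 𝔽 n k Sk ∅ ∧ X (simRank 𝔽 n k Sk) = Sk ∧
      (∀ i < simRank 𝔽 n k Sk, X i ⊂ X (i + 1)) ∧
      ∀ i ≤ simRank 𝔽 n k Sk, ModularFlat 𝔽 n k Sk (X i)

/-- `H` is a dense hyperplane of `Sim_k^n(ground)`: a hyperplane of the form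
`ground ∖ supp(δ^{k-1} V)` for some `(k-1)`-subset `V` simplicial in `⟨ground⟩`. -/
def DenseHyp (𝔽 : Type*) [Field 𝔽] (n k : ℕ) (ground H : Finset (Finset (Fin n))) : Prop :=
  SimHyperplane 𝔽 n k ground H ∧
    ∃ V : Finset (Fin n), V.card = k - 1 ∧ SimplicialFace k ground V ∧
      H = ground \ suppδ 𝔽 ground V

/-- `Sim_k^n(S_k)` is superdense: there is a chain `∅ = X_0 ⊊ X_1 ⊊ ⋯ ⊊ X_r = S_k` of flats
(`r` the rank) with each `X_i` a dense hyperplane of `Sim_k^n(X_{i+1})`. -/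
def Superdense (𝔽 : Type*) [Field 𝔽] (n k : ℕ) (Sk : Finset (Finset (Fin n))) : Prop :=
  ∃ X : ℕ → Finset (Finset (Fin n)),
    X 0 = ∅ ∧ X (simRank 𝔽 n k Sk) = Sk ∧
      (∀ i ≤ simRank 𝔽 n k Sk, SimFlat 𝔽 n k Sk (X i)) ∧
      (∀ i < simRank 𝔽 n k Sk, X i ⊂ X (i + 1)) ∧
      ∀ i < simRank 𝔽 n k Sk, DenseHyp 𝔽 n k (X (i + 1)) (X i)

/-- `Sim_k^n(S_k)` is triangulable over `𝔽`: the boundaries of the `(k+1)`-faces of `⟨S_k⟩`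
span the circuit space `ker ∂_k`. -/
def Triangulable (𝔽 : Type*) [Field 𝔽] (n k : ℕ) (Sk : Finset (Finset (Fin n))) : Prop :=
  Submodule.span 𝔽
      {v : ↥Sk → 𝔽 | ∃ X : Finset (Fin n), X.card = k + 1 ∧ IsFace k Sk X ∧ v = pbdry 𝔽 Sk X}
    = LinearMap.ker (bdryMap 𝔽 n k Sk)

/-- `Sim_k^n(S_k)` is strongly triangulable over `𝔽`: there are `(k+1)`-faces `X_1,…,X_{m'}`
of `⟨S_k⟩` whose boundaries span `ker ∂_k` and such that every circuit `C` has a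
representing vector `C⃗` with support `C` which is a combination, with nonzero coefficients,
of boundaries `∂_{k+1} X_{i_j}` with `⋃_{F ∈ C} F = ⋃_j X_{i_j}`. -/
def StronglyTriangulable (𝔽 : Type*) [Field 𝔽] (n k : ℕ)
    (Sk : Finset (Finset (Fin n))) : Prop :=
  ∃ (m' : ℕ) (Xs : Fin m' → Finset (Fin n)),
    (∀ i, (Xs i).card = k + 1 ∧ IsFace k Sk (Xs i)) ∧
    Submodule.span 𝔽 (Set.range fun i => pbdry 𝔽 Sk (Xs i)) = LinearMap.ker (bdryMap 𝔽 n k Sk) ∧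
    ∀ C, SimCircuit 𝔽 n k Sk C →
      ∃ (s : ℕ) (idx : Fin s → Fin m') (a : Fin s → 𝔽) (Cv : ↥Sk → 𝔽),
        (∀ j, a j ≠ 0) ∧ suppFin Cv = C ∧
        Cv = ∑ j, a j • pbdry 𝔽 Sk (Xs (idx j)) ∧
        C.biUnion id = Finset.univ.biUnion fun j : Fin s => Xs (idx j)

/-- The simple graph `([n], S_2)`. -/
def graphOf {n : ℕ} (S2 : Finset (Finset (Fin n))) : SimpleGraph (Fin n) where
  Adj u v := u ≠ v ∧ ({u, v} : Finset (Fin n)) ∈ S2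
  symm := by
    constructor
    intro u v h
    exact ⟨h.1.symm, by rw [Finset.pair_comm]; exact h.2⟩
  loopless := by constructor; intro u h; exact h.1 rfl

/-- A simple graph is chordal if every cycle of length at least four has a chord, i.e. an
edge of the graph joining two non-consecutive vertices of the cycle. -/
def Chordal {α : Type*} (G : SimpleGraph α) : Prop :=
  ∀ (v : α) (w : G.Walk v v), w.IsCycle → 4 ≤ w.length →
    ∃ u₁ u₂, u₁ ∈ w.support ∧ u₂ ∈ w.support ∧ G.Adj u₁ u₂ ∧ s(u₁, u₂) ∉ w.edges

/-!
For `k = 2` the faces of `⟨S_2⟩` are the cliques of `G = ([n], S_2)`, so `{v}` is simplicial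
exactly when `N(v)` is a nonempty clique, and `supp(δ¹{v})` is then the star of `v`. In the
graphic matroid this star is a cocircuit: deleting it loses the coordinate of `v`, while one
star edge `vu` and the triangle edges `uw` span all of it. As the complement of a cocircuit is a
hyperplane, D-perfectness satisfies the recursion "`S_2 = ∅`, or `G` has such a vertex `v` with
`G - v` D-perfect", where `G - v` deletes the edges at `v`.

Chordality satisfies the same recursion. Chordal graphs stay chordal when the edges at a vertex
are deleted, and they have a simplicial vertex (Dirac): for `x` not adjacent to `z`, let `C` be
the component of `z` in `G - N[x]`; a shortest path through `C` between two nonadjacent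
neighbours of `C` in `N(x)` would close with `x` a chordless cycle, so `N(C)` is a clique, and
induction on `C ∪ N(C)` yields a simplicial vertex inside `C`. Conversely, a cycle of length at
least four through a simplicial `v` has the two cycle-neighbours of `v` as a chord, and a cycle
avoiding `v` lives in `G - v`.
-/

namespace SimpleGraph

variable {V : Type*} {G : SimpleGraph V}

namespace Walk

lemma IsCycle.mk_snd_penultimate_notMem_edges {u : V} {c : G.Walk u u} (hc : c.IsCycle)
    (hl : 4 ≤ c.length) : s(c.snd, c.penultimate) ∉ c.edges := by
  have inj {i j : ℕ} (hi : 1 ≤ i ∧ i ≤ c.length) (hj : 1 ≤ j ∧ j ≤ c.length)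
      (h : c.getVert i = c.getVert j) : i = j := hc.getVert_injOn hi hj h
  have inj' {i j : ℕ} (hi : i ≤ c.length - 1) (hj : j ≤ c.length - 1)
      (h : c.getVert i = c.getVert j) : i = j := hc.getVert_injOn' hi hj h
  rw [mk_mem_edges_iff_exists]
  rintro ⟨i, hi, he⟩
  rcases Sym2.eq_iff.1 he with ⟨h₁, h₂⟩ | ⟨h₁, h₂⟩
  · obtain rfl | hi0 := Nat.eq_zero_or_pos i
    · have := inj' (by omega) (by omega) h₁
      omega
    · obtain rfl := inj ⟨hi0, by omega⟩ ⟨le_rfl, by omega⟩ h₁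
      have := inj ⟨by omega, by omega⟩ ⟨by omega, by omega⟩ h₂
      omega
  · obtain rfl : i = 0 := by
      have := inj ⟨by omega, by omega⟩ ⟨le_rfl, by omega⟩ h₂
      omega
    have := inj' (by omega) (by omega) h₁
    omega

lemma IsCycle.exists_neighbors_mk_notMem_edges [DecidableEq V] {u v : V} {c : G.Walk u u}
    (hc : c.IsCycle) (hl : 4 ≤ c.length) (hv : v ∈ c.support) :
    ∃ p q, p ≠ q ∧ s(v, p) ∈ c.edges ∧ s(v, q) ∈ c.edges ∧ s(p, q) ∉ c.edges := by
  have hc' := hc.rotate hv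
  have hnil := hc'.not_nil
  have hmem {e : Sym2 V} := (c.rotate_edges v hv).perm.mem_iff (a := e)
  refine ⟨_, _, hc'.snd_ne_penultimate, hmem.1 (mk_start_snd_mem_edges hnil), ?_,
    fun h => hc'.mk_snd_penultimate_notMem_edges (by simpa using hl) (hmem.2 h)⟩
  rw [Sym2.eq_swap]
  exact hmem.1 (mk_penultimate_end_mem_edges hnil)

lemma mk_mem_edges_of_length_eq_dist {u v a b : V} {p : G.Walk u v}
    (hp : p.length = G.dist u v) (ha : a ∈ p.support) (hb : b ∈ p.support) (hab : G.Adj a b) :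
    s(a, b) ∈ p.edges := by
  have key {i j : ℕ} (hij : i < j) (hj : j ≤ p.length)
      (hadj : G.Adj (p.getVert i) (p.getVert j)) : s(p.getVert i, p.getVert j) ∈ p.edges := by
    obtain rfl | hij := eq_or_lt_of_le (Nat.succ_le_of_lt hij)
    · exact p.mk_mem_edges_iff_exists.2 ⟨i, by omega, rfl⟩
    have := G.dist_le ((p.take i).append (cons hadj (p.drop j)))
    simp only [length_append, take_length, length_cons, drop_length] at this
    omega
  obtain ⟨i, rfl, hi⟩ := mem_support_iff_exists_getVert.1 ha
  obtain ⟨j, rfl, hj⟩ := mem_support_iff_exists_getVert.1 hb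
  rcases lt_trichotomy i j with h | rfl | h
  · exact key h hj hab
  · exact absurd hab (G.loopless.irrefl _)
  · rw [Sym2.eq_swap]
    exact key h hi hab.symm

end Walk

/-- The subgraph induced on `s`, kept on the vertex type `V` (unlike `SimpleGraph.induce`). -/
def restrict (G : SimpleGraph V) (s : Set V) : SimpleGraph V where
  Adj u v := u ∈ s ∧ v ∈ s ∧ G.Adj u v
  symm := ⟨fun _ _ h => ⟨h.2.1, h.1, h.2.2.symm⟩⟩
  loopless := ⟨fun _ h => G.loopless.irrefl _ h.2.2⟩

lemma restrict_le (s : Set V) : G.restrict s ≤ G := fun _ _ h => h.2.2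

lemma restrict_mono {s t : Set V} (h : s ⊆ t) : G.restrict s ≤ G.restrict t :=
  fun _ _ hadj => ⟨h hadj.1, h hadj.2.1, hadj.2.2⟩

lemma Walk.mem_of_mem_support_restrict {s : Set V} :
    ∀ {u v : V} (p : (G.restrict s).Walk u v), u ∈ s → ∀ w ∈ p.support, w ∈ s
  | _, _, .nil, hu, _, hw => by rw [Walk.support_nil, List.mem_singleton] at hw; exact hw ▸ hu
  | _, _, .cons h p, hu, _, hw => by
    rw [Walk.support_cons, List.mem_cons] at hw
    exact hw.elim (· ▸ hu) (p.mem_of_mem_support_restrict h.2.1 _)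

lemma Reachable.mem_of_restrict {s : Set V} {u v : V} (h : (G.restrict s).Reachable u v)
    (hu : u ∈ s) : v ∈ s :=
  h.elim fun p => p.mem_of_mem_support_restrict hu v p.end_mem_support

lemma reachable_restrict_setOf_reachable {s : Set V} {z u v : V}
    (hzu : (G.restrict s).Reachable z u) (huv : (G.restrict s).Reachable u v) :
    (G.restrict {w | (G.restrict s).Reachable z w}).Reachable u v := by
  obtain ⟨p⟩ := huv
  induction p with
  | nil => rfl
  | cons h p ih =>
    have hzv := hzu.trans h.reachable
    exact (show (G.restrict _).Adj _ _ from ⟨hzu, hzv, h.2.2⟩).reachable.trans (ih hzv)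

lemma exists_simplicial_notMem_of_isClique {A : Finset V}
    (hA : ∀ x ∈ A, ∀ z ∈ A, x ≠ z → ¬ G.Adj x z →
      ∃ y ∈ A, y ≠ x ∧ ¬ G.Adj x y ∧ G.IsClique (G.neighborSet y ∩ A))
    {K : Set V} (hK : G.IsClique K) {y₀ : V} (hy₀ : y₀ ∈ A) (hy₀K : y₀ ∉ K) :
    ∃ y ∈ A, y ∉ K ∧ G.IsClique (G.neighborSet y ∩ A) := by
  by_cases hKA : ∃ k ∈ K, k ∈ A ∧ ∃ z ∈ A, k ≠ z ∧ ¬ G.Adj k z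
  · obtain ⟨k, hk, hkA, z, hz, hkz, hnkz⟩ := hKA
    obtain ⟨y, hy, hyk, hnky, hcl⟩ := hA k hkA z hz hkz hnkz
    exact ⟨y, hy, fun hyK => hnky (hK hk hyK hyk.symm), hcl⟩
  push Not at hKA
  by_cases hAcl : G.IsClique (A : Set V)
  · exact ⟨y₀, hy₀, hy₀K, hAcl.subset Set.inter_subset_right⟩
  obtain ⟨w, hw, z, hz, hwz, hnwz⟩ : ∃ w ∈ A, ∃ z ∈ A, w ≠ z ∧ ¬ G.Adj w z := by
    simpa [IsClique, Set.Pairwise] using hAcl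
  obtain ⟨y, hy, hyw, hnwy, hcl⟩ := hA w hw z hz hwz hnwz
  exact ⟨y, hy, fun hyK => hnwy (hKA y hyK hy w hw hyw).symm, hcl⟩

theorem existsUnique_maximal_isClique_ssuperset_iff [Fintype V] {v : V} :
    (∃! X : Finset V, Maximal (fun X : Finset V => G.IsClique (X : Set V)) X ∧ {v} ⊂ X) ↔
      (G.neighborSet v).Nonempty ∧ G.IsClique (G.neighborSet v) := by
  classical
  constructor
  · rintro ⟨X, ⟨hX, hvX⟩, huniq⟩
    have hvX' : v ∈ X := Finset.singleton_subset_iff.1 hvX.1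
    have hN (u : V) (hvu : G.Adj v u) : u ∈ X := by
      obtain ⟨Y, hY, hYmax⟩ := Finite.exists_le_maximal (α := Finset V)
        (p := fun X : Finset V => G.IsClique (X : Set V)) (a := {v, u})
        (by rw [Finset.coe_pair]; exact isClique_pair.2 fun _ => hvu)
      have hvY : {v} ⊆ Y := Finset.singleton_subset_iff.2 (hY (by simp))
      have huY : u ∈ Y := hY (by simp)
      have hvY' : {v} ⊂ Y := (Finset.ssubset_iff_of_subset hvY).2 ⟨u, huY, by simpa using hvu.ne'⟩
      exact huniq Y ⟨hYmax, hvY'⟩ ▸ huY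
    obtain ⟨u, huX, huv⟩ := Finset.exists_of_ssubset hvX
    exact ⟨⟨u, hX.1 hvX' huX fun h => huv (h ▸ Finset.mem_singleton_self v)⟩,
      fun y hy z hz hyz => hX.1 (hN y hy) (hN z hz) hyz⟩
  · rintro ⟨⟨u, hu⟩, hcl⟩
    set X := insert v (Finset.univ.filter (G.Adj v))
    have hmem {y : V} : y ∈ X ↔ y = v ∨ G.Adj v y := by simp [X]
    have hsub (Y : Finset V) (hY : G.IsClique (Y : Set V)) (hvY : v ∈ Y) : Y ⊆ X := fun y hy =>
      hmem.2 <| (eq_or_ne y v).imp_right fun hyv => hY hvY hy hyv.symm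
    have hX : G.IsClique (X : Set V) := by
      rw [Finset.coe_insert, isClique_insert]
      exact ⟨hcl.subset fun y hy => by simpa using hy, fun y hy _ => by simpa using hy⟩
    have hvX : {v} ⊆ X := Finset.singleton_subset_iff.2 (hmem.2 (Or.inl rfl))
    refine ⟨X, ⟨⟨hX, fun Y hY hXY => hsub Y hY (hXY (Finset.singleton_subset_iff.1 hvX))⟩,
      (Finset.ssubset_iff_of_subset hvX).2 ⟨u, hmem.2 (Or.inr hu), by simpa using hu.ne'⟩⟩,
      fun Y ⟨hY, hvY⟩ => ?_⟩
    have hYX := hsub Y hY.1 (Finset.singleton_subset_iff.1 hvY.1)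
    exact le_antisymm hYX (hY.2 hX hYX)

end SimpleGraph

open SimpleGraph Walk

namespace Chordal

variable {V : Type*} {G H : SimpleGraph V}

/-- A shortest path from `s` to `t` closes, through a vertex `x` adjacent to its ends only, a
cycle of length at least four whose only possible chord is `st`. -/
lemma adj_of_length_eq_dist (hG : Chordal G) (hHG : H ≤ G) {x s t : V}
    {p : H.Walk s t} (hp : p.length = H.dist s t) (hst : s ≠ t) (hxs : G.Adj x s)
    (hxt : G.Adj x t) (hx : x ∉ p.support)
    (hxp : ∀ w ∈ p.support, G.Adj x w → w = s ∨ w = t)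
    (hH : ∀ a ∈ p.support, ∀ b ∈ p.support, G.Adj a b → H.Adj a b) : G.Adj s t := by
  by_contra hnst
  have hlen : 2 ≤ p.length := hp ▸ p.reachable.one_lt_dist_of_ne_of_not_adj hst
    (fun h => hnst (hHG h))
  set c := cons hxs ((p.mapLe hHG).concat hxt.symm)
  have hedges : c.edges = s(x, s) :: (p.edges ++ [s(t, x)]) := by
    simp [c, edges_concat]
  have hcyc : c.IsCycle := by
    rw [cons_isCycle_iff, concat_isPath_iff]
    refine ⟨⟨(p.isPath_of_length_eq_dist hp).mapLe hHG, by simpa using hx⟩, ?_⟩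
    simp only [edges_concat, edges_mapLe_eq_edges, List.concat_eq_append, List.mem_append,
      List.mem_singleton, not_or]
    refine ⟨fun h => hx (p.fst_mem_support_of_mem_edges h), ?_⟩
    rw [Sym2.eq_iff]
    rintro (⟨h, -⟩ | ⟨-, h⟩)
    exacts [hxt.ne h, hst h]
  have hx_edge : ∀ w ∈ p.support, G.Adj x w → s(x, w) ∈ c.edges := by
    intro w hw hxw
    rcases hxp w hw hxw with rfl | rfl
    · simp [hedges]
    · simp [hedges, Sym2.eq_swap]
  have hsupp : ∀ w ∈ c.support, w = x ∨ w ∈ p.support := by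
    simp [c, support_concat, or_comm]
  obtain ⟨u₁, u₂, h₁, h₂, hadj, hnot⟩ := hG x c hcyc
    (by simp only [c, length_cons, length_concat, length_map]; omega)
  rcases hsupp u₁ h₁ with rfl | hp₁ <;> rcases hsupp u₂ h₂ with rfl | hp₂
  · exact G.loopless.irrefl _ hadj
  · exact hnot (hx_edge u₂ hp₂ hadj)
  · exact hnot (Sym2.eq_swap ▸ hx_edge u₁ hp₁ hadj.symm)
  · refine hnot (hedges ▸ List.mem_cons_of_mem _ (List.mem_append_left _ ?_))
    exact mk_mem_edges_of_length_eq_dist hp hp₁ hp₂ (hH u₁ hp₁ u₂ hp₂ hadj)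

lemma isClique_neighbors_of_connected (hG : Chordal G) {x : V} {C : Set V}
    (hC : ∀ c ∈ C, c ≠ x ∧ ¬ G.Adj x c)
    (hconn : ∀ c ∈ C, ∀ c' ∈ C, (G.restrict C).Reachable c c') :
    G.IsClique {s | G.Adj x s ∧ ∃ c ∈ C, G.Adj s c} := by
  rintro s ⟨hxs, cs, hcs, hscs⟩ t ⟨hxt, ct, hct, htct⟩ hst
  set T := insert s (insert t C)
  have hCT : C ⊆ T := (Set.subset_insert _ _).trans (Set.subset_insert _ _)
  have hsT : s ∈ T := Set.mem_insert _ _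
  have htT : t ∈ T := Set.mem_insert_of_mem _ (Set.mem_insert _ _)
  have hreach : (G.restrict T).Reachable s t :=
    (show (G.restrict T).Adj s cs from ⟨hsT, hCT hcs, hscs⟩).reachable.trans <|
      ((hconn cs hcs ct hct).mono (restrict_mono hCT)).trans
      (show (G.restrict T).Adj ct t from ⟨hCT hct, htT, htct.symm⟩).reachable
  obtain ⟨p, hp⟩ := hreach.exists_walk_length_eq_dist
  have hpT := p.mem_of_mem_support_restrict hsT
  refine hG.adj_of_length_eq_dist (restrict_le T) hp hst hxs hxt (fun hx => ?_) (fun w hw hxw => ?_)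
    (fun a ha b hb hab => ⟨hpT a ha, hpT b hb, hab⟩)
  · rcases hpT x hx with h | h | h
    exacts [hxs.ne h, hxt.ne h, (hC x h).1 rfl]
  · rcases hpT w hw with h | h | h
    exacts [Or.inl h, Or.inr h, ((hC w h).2 hxw).elim]

theorem exists_simplicial_not_adj (hG : Chordal G) (A : Finset V) :
    ∀ x ∈ A, ∀ z ∈ A, x ≠ z → ¬ G.Adj x z →
      ∃ y ∈ A, y ≠ x ∧ ¬ G.Adj x y ∧ G.IsClique (G.neighborSet y ∩ A) := by
  classical
  induction A using Finset.strongInduction with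
  | H A ih =>
  intro x hx z hz hxz hnxz
  -- `C` is the component of `z` in `A - N[x]`; its neighbours outside it lie in the clique `S`.
  set D : Set V := {u | u ∈ A ∧ u ≠ x ∧ ¬ G.Adj x u}
  set C : Set V := {u | (G.restrict D).Reachable z u}
  set S : Set V := {s | G.Adj x s ∧ ∃ c ∈ C, G.Adj s c}
  have hzD : z ∈ D := ⟨hz, hxz.symm, hnxz⟩
  have hCD : C ⊆ D := fun c hc => Reachable.mem_of_restrict hc hzD
  have hS : G.IsClique S := hG.isClique_neighbors_of_connected (fun c hc => (hCD hc).2)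
    fun c hc c' hc' => (reachable_restrict_setOf_reachable (Reachable.refl z) hc).symm.trans
      (reachable_restrict_setOf_reachable (Reachable.refl z) hc')
  set A' := A.filter (· ∈ C ∪ S)
  have hA' : A' ⊂ A := Finset.filter_ssubset.2 ⟨x, hx, by
    rintro (hxC | ⟨hxx, -⟩)
    exacts [(hCD hxC).2.1 rfl, G.loopless.irrefl x hxx]⟩
  have hzA' : z ∈ A' := Finset.mem_filter.2 ⟨hz, Or.inl (Reachable.refl z)⟩
  obtain ⟨y, hyA', hyS, hcl⟩ := exists_simplicial_notMem_of_isClique (ih A' hA') hS hzA'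
    fun hzS => hnxz hzS.1
  obtain ⟨hyA, hyC⟩ : y ∈ A ∧ y ∈ C :=
    (Finset.mem_filter.1 hyA').imp_right fun h => h.resolve_right hyS
  have hNA' : G.neighborSet y ∩ A ⊆ G.neighborSet y ∩ A' := by
    rintro u ⟨hyu, huA⟩
    refine ⟨hyu, Finset.mem_filter.2 ⟨huA, ?_⟩⟩
    by_cases hu : u ∈ D
    · exact Or.inl <| hyC.trans
        (show (G.restrict D).Adj y u from ⟨hCD hyC, hu, hyu⟩).reachable
    · refine Or.inr ⟨?_, y, hyC, hyu.symm⟩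
      by_contra hxu
      exact hu ⟨huA, fun hux => (hCD hyC).2.2 (hux ▸ hyu.symm), hxu⟩
  exact ⟨y, hyA, (hCD hyC).2.1, (hCD hyC).2.2, hcl.subset hNA'⟩

theorem exists_simplicial [Finite V] (hG : Chordal G) {a b : V} (hab : G.Adj a b) :
    ∃ v, (G.neighborSet v).Nonempty ∧ G.IsClique (G.neighborSet v) := by
  classical
  have := Fintype.ofFinite V
  set A := Finset.univ.filter fun u => (G.neighborSet u).Nonempty
  have hNA (v : V) : G.neighborSet v ⊆ A := fun u hu =>
    Finset.mem_filter.2 ⟨Finset.mem_univ u, v, Adj.symm hu⟩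
  obtain ⟨v, hvA, -, hcl⟩ := exists_simplicial_notMem_of_isClique
    (hG.exists_simplicial_not_adj A) (isClique_empty (G := G)) (hNA a hab) (Set.notMem_empty b)
  exact ⟨v, (Finset.mem_filter.1 hvA).2, by rwa [Set.inter_eq_left.2 (hNA v)] at hcl⟩

theorem deleteIncidenceSet (hG : Chordal G) (v : V) : Chordal (G.deleteIncidenceSet v) := by
  classical
  intro w c hc hl
  have hne {u : V} (hu : u ∈ c.support) : u ≠ v := by
    obtain ⟨p, -, -, hp, -⟩ := hc.exists_neighbors_mk_notMem_edges hl hu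
    exact (deleteIncidenceSet_adj.1 (c.adj_of_mem_edges hp)).2.1
  obtain ⟨u₁, u₂, h₁, h₂, hadj, hnot⟩ := hG w (c.mapLe (G.deleteIncidenceSet_le v))
    (hc.mapLe _) (by rwa [length_mapLe])
  rw [support_mapLe_eq_support] at h₁ h₂
  rw [edges_mapLe_eq_edges] at hnot
  exact ⟨u₁, u₂, h₁, h₂, deleteIncidenceSet_adj.2 ⟨hadj, hne h₁, hne h₂⟩, hnot⟩

theorem of_deleteIncidenceSet {v : V} (hG : Chordal (G.deleteIncidenceSet v))
    (hv : G.IsClique (G.neighborSet v)) : Chordal G := by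
  classical
  intro w c hc hl
  by_cases hvc : v ∈ c.support
  · obtain ⟨p, q, hpq, hp, hq, hnot⟩ := hc.exists_neighbors_mk_notMem_edges hl hvc
    exact ⟨p, q, c.snd_mem_support_of_mem_edges hp, c.snd_mem_support_of_mem_edges hq,
      hv (c.adj_of_mem_edges hp) (c.adj_of_mem_edges hq) hpq, hnot⟩
  have hedges : ∀ e ∈ c.edges, e ∈ (G.deleteIncidenceSet v).edgeSet := by
    intro e he
    induction e using Sym2.ind with
    | _ a b =>
      refine deleteIncidenceSet_adj.2 ⟨c.adj_of_mem_edges he, ?_, ?_⟩ <;> rintro rfl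
      exacts [hvc (c.fst_mem_support_of_mem_edges he), hvc (c.snd_mem_support_of_mem_edges he)]
  obtain ⟨u₁, u₂, h₁, h₂, hadj, hnot⟩ := hG w (c.transfer _ hedges) (hc.transfer hedges)
    (by rwa [length_transfer])
  rw [support_transfer] at h₁ h₂
  rw [edges_transfer] at hnot
  exact ⟨u₁, u₂, h₁, h₂, (G.deleteIncidenceSet_le v) hadj, hnot⟩

end Chordal

theorem chordal_bot {V : Type*} : Chordal (⊥ : SimpleGraph V) :=
  fun _ c hc _ => absurd (c.adj_snd hc.not_nil) (by simp)

theorem chordal_iff_exists_simplicial {V : Type*} [Finite V] {G : SimpleGraph V} {a b : V}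
    (hab : G.Adj a b) :
    Chordal G ↔ ∃ v, (G.neighborSet v).Nonempty ∧ G.IsClique (G.neighborSet v) ∧
      Chordal (G.deleteIncidenceSet v) := by
  refine ⟨fun hG => ?_, fun ⟨_, _, hv, hG⟩ => hG.of_deleteIncidenceSet hv⟩
  obtain ⟨v, hne, hv⟩ := hG.exists_simplicial hab
  exact ⟨v, hne, hv, hG.deleteIncidenceSet v⟩

def vertexStar {α : Type*} [DecidableEq α] (E : Finset (Finset α)) (v : α) :
    Finset (Finset α) :=
  E.filter (v ∈ ·)

section CliqueComplex

variable {n : ℕ} {E : Finset (Finset (Fin n))} {v : Fin n}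

@[simp]
lemma graphOf_empty : graphOf (∅ : Finset (Finset (Fin n))) = ⊥ := by
  ext; simp [graphOf]

lemma mem_vertexStar_iff (hE : ∀ F ∈ E, F.card = 2) {F : Finset (Fin n)} :
    F ∈ vertexStar E v ↔ ∃ w, (graphOf E).Adj v w ∧ F = {v, w} := by
  constructor
  · intro hF
    obtain ⟨hFE, hvF⟩ := Finset.mem_filter.1 hF
    obtain ⟨a, b, hab, rfl⟩ := Finset.card_eq_two.1 (hE F hFE)
    rcases Finset.mem_insert.1 hvF with rfl | hvb
    · exact ⟨b, ⟨hab, hFE⟩, rfl⟩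
    · obtain rfl := Finset.mem_singleton.1 hvb
      exact ⟨a, ⟨hab.symm, Finset.pair_comm a v ▸ hFE⟩, Finset.pair_comm a v⟩
  · rintro ⟨w, ⟨-, hvw⟩, rfl⟩
    exact Finset.mem_filter.2 ⟨hvw, Finset.mem_insert_self v {w}⟩

lemma graphOf_sdiff_vertexStar :
    graphOf (E \ vertexStar E v) = (graphOf E).deleteIncidenceSet v := by
  ext a b
  simp only [graphOf, SimpleGraph.deleteIncidenceSet_adj, vertexStar, Finset.mem_sdiff,
    Finset.mem_filter, Finset.mem_insert, Finset.mem_singleton]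
  grind

lemma sdiff_vertexStar_ssubset (hv : ((graphOf E).neighborSet v).Nonempty) :
    E \ vertexStar E v ⊂ E := by
  obtain ⟨u, -, hvu⟩ := hv
  exact Finset.sdiff_ssubset (Finset.filter_subset _ _)
    ⟨_, Finset.mem_filter.2 ⟨hvu, Finset.mem_insert_self v {u}⟩⟩

lemma isFace_two_iff {F : Finset (Fin n)} :
    IsFace 2 E F ↔ (graphOf E).IsClique (F : Set (Fin n)) := by
  constructor
  · rintro (hF | hF) a ha b hb hab
    · exact absurd (Finset.card_le_one.1 (Nat.lt_succ_iff.1 hF) a ha b hb) hab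
    · exact ⟨hab, hF _ (Finset.insert_subset ha (Finset.singleton_subset_iff.2 hb))
        (Finset.card_pair hab)⟩
  · refine fun hF => Or.inr fun G hG hcard => ?_
    obtain ⟨a, b, hab, rfl⟩ := Finset.card_eq_two.1 hcard
    exact (hF (hG (Finset.mem_insert_self a {b})) (hG (by simp)) hab).2

lemma isFacet_two_iff {F : Finset (Fin n)} :
    IsFacet 2 E F ↔
      Maximal (fun X : Finset (Fin n) => (graphOf E).IsClique (X : Set (Fin n))) F := by
  simp only [IsFacet, Maximal, isFace_two_iff]
  exact and_congr_right fun _ => forall_congr' fun X => imp_congr_right fun _ =>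
    ⟨fun h hFX => (h hFX).ge, fun h hFX => le_antisymm hFX (h hFX)⟩

lemma simplicialFace_two_singleton_iff :
    SimplicialFace 2 E {v} ↔ ((graphOf E).neighborSet v).Nonempty ∧
      (graphOf E).IsClique ((graphOf E).neighborSet v) := by
  simp only [SimplicialFace, isFacet_two_iff]
  exact existsUnique_maximal_isClique_ssuperset_iff

end CliqueComplex

section Boundary

variable {𝔽 : Type*} [Field 𝔽] {n : ℕ}

lemma inc_pair_of_lt {a b : Fin n} (hab : a < b) (W : Finset (Fin n)) :
    inc W {a, b} = (if W = {a} then 1 else 0) - (if W = {b} then 1 else 0) := by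
  have hfa : ({a, b} : Finset (Fin n)).filter (· ≤ a) = {a} := by
    ext x; simp only [Finset.mem_filter, Finset.mem_insert, Finset.mem_singleton]
    constructor
    · rintro ⟨rfl | rfl, h⟩
      exacts [rfl, absurd h (not_le.2 hab)]
    · rintro rfl; exact ⟨Or.inl rfl, le_rfl⟩
  have hfb : ({a, b} : Finset (Fin n)).filter (· ≤ b) = {a, b} :=
    Finset.filter_true_of_mem fun x hx => by
      rcases Finset.mem_insert.1 hx with rfl | hx
      exacts [hab.le, (Finset.mem_singleton.1 hx).le]
  rw [inc, Finset.sum_pair hab.ne, hfa, hfb, Finset.card_singleton, Finset.card_pair hab.ne,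
    Finset.erase_insert (by simpa using hab.ne), Finset.erase_insert_of_ne hab.ne,
    Finset.erase_singleton, Finset.insert_empty]
  have : ({a} : Finset (Fin n)) ≠ {b} := by simpa using hab.ne
  split_ifs <;> simp_all

lemma inc_singleton_ne_zero_iff {F : Finset (Fin n)} (hF : F.card = 2) {v : Fin n} :
    ((inc {v} F : ℤ) : 𝔽) ≠ 0 ↔ v ∈ F := by
  obtain ⟨a, b, hab, rfl⟩ := Finset.card_eq_two.1 hF
  wlog hlt : a < b generalizing a b
  · rw [Finset.pair_comm]
    exact this b a hab.symm (Finset.card_pair hab.symm)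
      (lt_of_le_of_ne (not_lt.1 hlt) hab.symm)
  rw [inc_pair_of_lt hlt]
  by_cases hva : v = a
  · subst hva; simp [hab]
  by_cases hvb : v = b
  · subst hvb; simp [hab.symm]
  simp [hva, hvb]

def vertexVec (𝔽 : Type*) [Field 𝔽] (v : Fin n) : Csets n 1 → 𝔽 :=
  Pi.single ⟨{v}, Finset.card_singleton v⟩ 1

lemma bvec_pair_of_lt {a b : Fin n} (hab : a < b) :
    bvec 𝔽 n 2 {a, b} = vertexVec 𝔽 a - vertexVec 𝔽 b := by
  funext W
  simp only [bvec, inc_pair_of_lt hab, vertexVec, Pi.sub_apply, Pi.single_apply, Subtype.ext_iff]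
  push_cast
  rfl

lemma bvec_pair_mem_iff {P : Submodule 𝔽 (Csets n 1 → 𝔽)} {a b : Fin n} (hab : a ≠ b) :
    bvec 𝔽 n 2 {a, b} ∈ P ↔ vertexVec 𝔽 a - vertexVec 𝔽 b ∈ P := by
  rcases hab.lt_or_gt with h | h
  · rw [bvec_pair_of_lt h]
  · rw [Finset.pair_comm, bvec_pair_of_lt h, ← neg_sub, neg_mem_iff]

end Boundary

section Rank

variable {𝔽 : Type*} [Field 𝔽] {n k : ℕ}

lemma simRank_mono {X Y : Finset (Finset (Fin n))} (h : X ⊆ Y) :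
    simRank 𝔽 n k X ≤ simRank 𝔽 n k Y :=
  Submodule.finrank_mono (Submodule.span_mono (Set.image_mono (Finset.coe_subset.2 h)))

lemma simRank_insert_le (F : Finset (Fin n)) (X : Finset (Finset (Fin n))) :
    simRank 𝔽 n k (insert F X) ≤ simRank 𝔽 n k X + 1 := by
  have hF : Module.finrank 𝔽 (Submodule.span 𝔽 {bvec 𝔽 n k F}) ≤ 1 :=
    (finrank_span_le_card ({bvec 𝔽 n k F} : Set (Csets n (k - 1) → 𝔽))).trans (by simp)
  have := Submodule.finrank_add_le_finrank_add_finrank (Submodule.span 𝔽 {bvec 𝔽 n k F})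
    (Submodule.span 𝔽 ((fun G => bvec 𝔽 n k G) '' X))
  rw [simRank, simRank, Finset.coe_insert, Set.image_insert_eq, Submodule.span_insert]
  omega

lemma simRank_eq_zero_iff {X : Finset (Finset (Fin n))} :
    simRank 𝔽 n k X = 0 ↔ ∀ F ∈ X, bvec 𝔽 n k F = 0 := by
  rw [simRank, Submodule.finrank_eq_zero, Submodule.span_eq_bot]
  simp

lemma SimCocircuit.simRank_sdiff_add_one {Sk C : Finset (Finset (Fin n))}
    (hC : SimCocircuit 𝔽 n k Sk C) : simRank 𝔽 n k (Sk \ C) + 1 = simRank 𝔽 n k Sk := by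
  obtain ⟨-, hlt, hmin⟩ := hC
  obtain ⟨F, hF⟩ : C.Nonempty := Finset.nonempty_iff_ne_empty.2 fun h => by simp [h] at hlt
  have hle : Sk \ C.erase F ⊆ insert F (Sk \ C) := by
    intro G hG
    rw [Finset.mem_insert, Finset.mem_sdiff]
    rw [Finset.mem_sdiff, Finset.mem_erase, not_and'] at hG
    by_cases hGF : G = F
    exacts [Or.inl hGF, Or.inr ⟨hG.1, fun hGC => hG.2 hGC hGF⟩]
  have := (hmin _ (Finset.erase_ssubset hF)).symm.trans_le
    ((simRank_mono hle).trans (simRank_insert_le F _))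
  omega

end Rank

section CocircuitOfSimplicial

variable {𝔽 : Type*} [Field 𝔽] {n : ℕ} {E : Finset (Finset (Fin n))} {v : Fin n}

lemma bvec_notMem_span_sdiff_vertexStar (hE : ∀ F ∈ E, F.card = 2) {F : Finset (Fin n)}
    (hF : F.card = 2) (hvF : v ∈ F) :
    bvec 𝔽 n 2 F ∉ Submodule.span 𝔽 ((fun G => bvec 𝔽 n 2 G) '' ↑(E \ vertexStar E v)) := by
  let φ := LinearMap.proj (R := 𝔽) (φ := fun _ : Csets n 1 => 𝔽)
    ⟨{v}, Finset.card_singleton v⟩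
  have hker : Submodule.span 𝔽 ((fun G => bvec 𝔽 n 2 G) '' ↑(E \ vertexStar E v)) ≤
      LinearMap.ker φ := by
    rw [Submodule.span_le]
    rintro _ ⟨G, hG, rfl⟩
    obtain ⟨hGE, hvG⟩ := Finset.mem_sdiff.1 hG
    exact not_not.1 fun h =>
      hvG (Finset.mem_filter.2 ⟨hGE, (inc_singleton_ne_zero_iff (hE G hGE)).1 h⟩)
  exact fun h => (inc_singleton_ne_zero_iff hF).2 hvF (hker h)

lemma span_sdiff_of_ssubset_vertexStar (hE : ∀ F ∈ E, F.card = 2)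
    (hv : (graphOf E).IsClique ((graphOf E).neighborSet v)) {C : Finset (Finset (Fin n))}
    (hC : C ⊂ vertexStar E v) :
    Submodule.span 𝔽 ((fun G => bvec 𝔽 n 2 G) '' ↑(E \ C)) =
      Submodule.span 𝔽 ((fun G => bvec 𝔽 n 2 G) '' ↑E) := by
  set P := Submodule.span 𝔽 ((fun G => bvec 𝔽 n 2 G) '' ↑(E \ C))
  have hP {F : Finset (Fin n)} (hF : F ∈ E) (hFC : F ∉ C) : bvec 𝔽 n 2 F ∈ P :=
    Submodule.subset_span ⟨F, Finset.mem_sdiff.2 ⟨hF, hFC⟩, rfl⟩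
  refine le_antisymm (Submodule.span_mono (Set.image_mono (by simp))) ?_
  rw [Submodule.span_le]
  rintro _ ⟨F, hF, rfl⟩
  by_cases hFC : F ∉ C
  · exact hP hF hFC
  obtain ⟨w, hvw, rfl⟩ := (mem_vertexStar_iff hE).1 (hC.1 (not_not.1 hFC))
  obtain ⟨e, heS, heC⟩ := Finset.exists_of_ssubset hC
  obtain ⟨u, hvu, rfl⟩ := (mem_vertexStar_iff hE).1 heS
  by_cases huw : u = w
  · exact absurd (huw ▸ heC) hFC
  have huwC : {u, w} ∉ C := fun h => by
    obtain ⟨-, hv'⟩ := Finset.mem_filter.1 (hC.1 h)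
    rcases Finset.mem_insert.1 hv' with h | h
    exacts [hvu.1 h, hvw.1 (Finset.mem_singleton.1 h)]
  show bvec 𝔽 n 2 {v, w} ∈ P
  rw [bvec_pair_mem_iff hvw.1, ← sub_add_sub_cancel _ (vertexVec 𝔽 u)]
  exact add_mem ((bvec_pair_mem_iff hvu.1).1 (hP hvu.2 heC))
    ((bvec_pair_mem_iff huw).1 (hP (hv hvu hvw huw).2 huwC))

theorem simCocircuit_vertexStar (hE : ∀ F ∈ E, F.card = 2)
    (hne : ((graphOf E).neighborSet v).Nonempty)
    (hv : (graphOf E).IsClique ((graphOf E).neighborSet v)) :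
    SimCocircuit 𝔽 n 2 E (vertexStar E v) := by
  refine ⟨Finset.filter_subset _ _, ?_, fun C hC => by
    rw [simRank, simRank, span_sdiff_of_ssubset_vertexStar hE hv hC]⟩
  obtain ⟨u, hvu, huE⟩ := hne
  refine Submodule.finrank_lt_finrank_of_lt (lt_of_le_of_ne
    (Submodule.span_mono (Set.image_mono (by simp))) fun h => ?_)
  exact bvec_notMem_span_sdiff_vertexStar (𝔽 := 𝔽) hE (hE _ huE) (Finset.mem_insert_self v {u})
    (h ▸ Submodule.subset_span ⟨_, huE, rfl⟩)

end CocircuitOfSimplicial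

section DPerfect

variable {𝔽 : Type*} [Field 𝔽] {n k : ℕ} {Sk : Finset (Finset (Fin n))}

lemma mem_suppδ {V F : Finset (Fin n)} :
    F ∈ suppδ 𝔽 Sk V ↔ F ∈ Sk ∧ ((inc V F : ℤ) : 𝔽) ≠ 0 := by
  classical
  simp only [suppδ, suppFin, Finset.mem_image, Subtype.exists, exists_and_right, exists_eq_right]
  exact ⟨fun ⟨h, hm⟩ => ⟨h, (Finset.mem_filter.1 hm).2⟩,
    fun ⟨h, hne⟩ => ⟨h, Finset.mem_filter.2 ⟨Finset.mem_attach _ _, hne⟩⟩⟩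

lemma mem_delSeq {V : ℕ → Finset (Fin n)} {j : ℕ} {F : Finset (Fin n)} :
    F ∈ delSeq 𝔽 Sk V j ↔ F ∈ Sk ∧ ∀ i < j, ((inc (V i) F : ℤ) : 𝔽) = 0 := by
  induction j with
  | zero => simp [delSeq]
  | succ j ih =>
    simp only [delSeq, Finset.mem_sdiff, mem_suppδ, ih, Nat.lt_succ_iff_lt_or_eq]
    grind

lemma Cstar_eq_suppδ_delSeq (V : ℕ → Finset (Fin n)) (j : ℕ) :
    Cstar 𝔽 Sk V j = suppδ 𝔽 (delSeq 𝔽 Sk V j) (V j) := by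
  ext F
  simp only [Cstar, Finset.mem_sdiff, Finset.mem_biUnion, Finset.mem_range, mem_suppδ, mem_delSeq]
  grind

lemma delSeq_succ (V : ℕ → Finset (Fin n)) (j : ℕ) :
    delSeq 𝔽 Sk V (j + 1) = delSeq 𝔽 (Sk \ suppδ 𝔽 Sk (V 0)) (fun i => V (i + 1)) j := by
  induction j with
  | zero => rfl
  | succ j ih => rw [delSeq, ih]; rfl

/-- The conditions a D-perfect basic linear sequence imposes on its term `W = V_j`, where
`Δ = Δ_{j-1}`: by `Cstar_eq_suppδ_delSeq`, `C*_j` is `supp(δ^{k-1} W)` computed in `Δ`. -/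
def IsDPerfectStep (𝔽 : Type*) [Field 𝔽] (n k : ℕ) (Δ : Finset (Finset (Fin n)))
    (W : Finset (Fin n)) : Prop :=
  W.card = k - 1 ∧ SimplicialFace k Δ W ∧ SimCocircuit 𝔽 n k Δ (suppδ 𝔽 Δ W)

lemma dPerfect_iff_exists_forall_isDPerfectStep :
    DPerfect 𝔽 n k Sk ↔ ∃ V : ℕ → Finset (Fin n),
      ∀ j < simRank 𝔽 n k Sk, IsDPerfectStep 𝔽 n k (delSeq 𝔽 Sk V j) (V j) := by
  simp only [DPerfect, BasicLinearSeq, IsDPerfectStep, Cstar_eq_suppδ_delSeq, true_and]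
  refine exists_congr fun V => ⟨fun ⟨⟨hcard, hcoc⟩, hsimp⟩ j hj =>
    ⟨hcard j hj, hsimp j hj, hcoc j hj⟩, fun h =>
    ⟨⟨fun j hj => (h j hj).1, fun j hj => (h j hj).2.2⟩, fun j hj => (h j hj).2.1⟩⟩

theorem dPerfect_iff :
    DPerfect 𝔽 n k Sk ↔ simRank 𝔽 n k Sk = 0 ∨
      ∃ W, IsDPerfectStep 𝔽 n k Sk W ∧ DPerfect 𝔽 n k (Sk \ suppδ 𝔽 Sk W) := by
  simp only [dPerfect_iff_exists_forall_isDPerfectStep]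
  constructor
  · rintro ⟨V, hV⟩
    refine (Nat.eq_zero_or_pos _).imp_right fun hr =>
      ⟨V 0, hV 0 hr, fun i => V (i + 1), fun j hj => ?_⟩
    have : simRank 𝔽 n k (Sk \ suppδ 𝔽 Sk (V 0)) + 1 = simRank 𝔽 n k Sk :=
      (hV 0 hr).2.2.simRank_sdiff_add_one
    rw [← delSeq_succ]
    exact hV (j + 1) (by omega)
  · rintro (hr | ⟨W, hW, V, hV⟩)
    · exact ⟨fun _ => ∅, fun j hj => absurd hj (hr ▸ Nat.not_lt_zero j)⟩
    have := hW.2.2.simRank_sdiff_add_one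
    refine ⟨fun | 0 => W | i + 1 => V i, fun j hj => ?_⟩
    cases j with
    | zero => exact hW
    | succ j => rw [delSeq_succ]; exact hV j (by omega)

end DPerfect

section TwoDim

variable {𝔽 : Type*} [Field 𝔽] {n : ℕ} {E : Finset (Finset (Fin n))}

lemma suppδ_singleton (hE : ∀ F ∈ E, F.card = 2) (v : Fin n) :
    suppδ 𝔽 E {v} = vertexStar E v := by
  ext F
  rw [mem_suppδ, vertexStar, Finset.mem_filter]
  exact and_congr_right fun hF => inc_singleton_ne_zero_iff (hE F hF)

lemma simRank_two_ne_zero (hE : ∀ F ∈ E, F.card = 2) (hne : E.Nonempty) :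
    simRank 𝔽 n 2 E ≠ 0 := by
  obtain ⟨F, hF⟩ := hne
  obtain ⟨v, hv⟩ := Finset.card_pos.1 (by rw [hE F hF]; omega : 0 < F.card)
  rw [Ne, simRank_eq_zero_iff]
  exact fun h => (inc_singleton_ne_zero_iff (𝔽 := 𝔽) (hE F hF)).2 hv
    (congrFun (h F hF) ⟨{v}, Finset.card_singleton v⟩)

theorem dPerfect_two_iff (hE : ∀ F ∈ E, F.card = 2) (hne : E.Nonempty) :
    DPerfect 𝔽 n 2 E ↔ ∃ v, ((graphOf E).neighborSet v).Nonempty ∧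
      (graphOf E).IsClique ((graphOf E).neighborSet v) ∧
      DPerfect 𝔽 n 2 (E \ vertexStar E v) := by
  rw [dPerfect_iff, or_iff_right (simRank_two_ne_zero hE hne)]
  constructor
  · rintro ⟨W, ⟨hcard, hW, -⟩, hdp⟩
    obtain ⟨v, rfl⟩ := Finset.card_eq_one.1 hcard
    rw [simplicialFace_two_singleton_iff] at hW
    rw [suppδ_singleton hE v] at hdp
    exact ⟨v, hW.1, hW.2, hdp⟩
  · rintro ⟨v, hne, hcl, hdp⟩
    refine ⟨{v}, ⟨Finset.card_singleton v, simplicialFace_two_singleton_iff.2 ⟨hne, hcl⟩, ?_⟩,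
      ?_⟩
    all_goals rw [suppδ_singleton hE v]
    exacts [simCocircuit_vertexStar hE hne hcl, hdp]

end TwoDim

theorem stmt5_general (𝔽 : Type*) [Field 𝔽] (n : ℕ)
    (S2 : Finset (Finset (Fin n))) (hS2 : ∀ F ∈ S2, F.card = 2) :
    Chordal (graphOf S2) ↔ DPerfect 𝔽 n 2 S2 := by
  induction S2 using Finset.strongInduction with
  | H E ih =>
  rcases E.eq_empty_or_nonempty with rfl | hne
  · rw [graphOf_empty]
    exact iff_of_true chordal_bot (dPerfect_iff.2 (Or.inl (simRank_eq_zero_iff.2 (by simp))))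
  obtain ⟨F, hF⟩ := hne
  obtain ⟨a, b, hab, rfl⟩ := Finset.card_eq_two.1 (hS2 F hF)
  rw [chordal_iff_exists_simplicial (show (graphOf E).Adj a b from ⟨hab, hF⟩),
    dPerfect_two_iff hS2 ⟨_, hF⟩]
  refine exists_congr fun v => and_congr_right fun hv => and_congr_right fun _ => ?_
  rw [← graphOf_sdiff_vertexStar]
  exact ih _ (sdiff_vertexStar_ssubset hv) fun F hF => hS2 F (Finset.sdiff_subset hF)

theorem stmt5 (𝔽 : Type*) [Field 𝔽] (n : ℕ) (hn : 2 ≤ n)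
    (S2 : Finset (Finset (Fin n))) (hS2 : ∀ F ∈ S2, F.card = 2) :
    Chordal (graphOf S2) ↔ DPerfect 𝔽 n 2 S2 :=
  stmt5_general 𝔽 n S2 hS2
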